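/- arXiv:1402.2119 — 5 statements merged into one kernel-verified Lean document; each statement's English description precedes it below -/
import Mathlib

section
/- The map ζ sending a graph G to the graph G with vertex n and all its incident edges removed is a bijection from B^Δ[n] (two-connected graphs on [n] in which vertex n is adjacent to all other vertices) onto the set of connected graphs on [n-1]. -/
open scoped Classical

/-- A graph is two-connected if it is connected and remains connected after
deleting any single vertex (and its incident edges). -/
def TwoConnected {V : Type*} (G : SimpleGraph V) : Prop :=
  G.Connected ∧ ∀ v : V, (G.induce ({v}ᶜ : Set V)).Connected

/-!
A graph `G` on `[n]` in which `n` is adjacent to everything is determined by `ζ(G)`, and every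
graph `H` on `[n-1]` arises this way from the cone over `H`. For such `G`, deleting `n` leaves
`ζ(G)`, while deleting any other vertex leaves a graph in which `n` is still adjacent to
everything, hence connected; so `G` is two-connected exactly when `ζ(G)` is connected.
-/

namespace SimpleGraph

variable {V W : Type*}

theorem connected_of_forall_adj {G : SimpleGraph W} {h : W} (hub : ∀ v, v ≠ h → G.Adj h v) :
    G.Connected := by
  have reach (v : W) : G.Reachable h v := by
    by_cases hv : v = h
    · subst hv; rfl
    · exact (hub v hv).reachable
  have : Nonempty W := ⟨h⟩
  exact ⟨fun u v => (reach u).symm.trans (reach v)⟩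

theorem twoConnected_of_forall_adj {G : SimpleGraph W} {h : W} (hub : ∀ v, v ≠ h → G.Adj h v)
    (hdel : (G.induce ({h}ᶜ : Set W)).Connected) : TwoConnected G := by
  refine ⟨connected_of_forall_adj hub, fun v => ?_⟩
  by_cases hv : v = h
  · exact hv ▸ hdel
  · refine connected_of_forall_adj (h := ⟨h, Ne.symm hv⟩) fun w hw => ?_
    exact hub w fun hwh => hw (Subtype.ext hwh)

variable (f : V ↪ W) (h : W)

def cone (H : SimpleGraph V) : SimpleGraph W :=
  H.map f ⊔ fromRel fun a _ => a = h

variable {f h}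

theorem cone_adj_apex (H : SimpleGraph V) (v : W) (hv : v ≠ h) : (cone f h H).Adj h v :=
  Or.inr ⟨Ne.symm hv, Or.inl rfl⟩

theorem comap_cone (hh : h ∉ Set.range f) (H : SimpleGraph V) : (cone f h H).comap f = H := by
  ext a b
  have hb : f b ≠ h := fun hb => hh ⟨b, hb⟩
  have ha : f a ≠ h := fun ha => hh ⟨a, ha⟩
  simp [cone, fromRel_adj, ha, hb]

theorem connected_comap_iff_induce_compl (hf : Set.range f = {h}ᶜ) (G : SimpleGraph W) :
    (G.comap f).Connected ↔ (G.induce ({h}ᶜ : Set W)).Connected :=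
  hf ▸ (Embedding.comap f G).isoInduceRange.connected_iff

theorem eq_of_comap_eq_of_forall_adj (hf : Set.range f = {h}ᶜ) {G₁ G₂ : SimpleGraph W}
    (hub₁ : ∀ v, v ≠ h → G₁.Adj h v) (hub₂ : ∀ v, v ≠ h → G₂.Adj h v)
    (heq : G₁.comap f = G₂.comap f) : G₁ = G₂ := by
  have mem_range {v : W} (hv : v ≠ h) : v ∈ Set.range f := hf ▸ hv
  ext a b
  by_cases ha : a = h
  · subst ha
    by_cases hb : b = a
    · simp [hb]
    · exact iff_of_true (hub₁ b hb) (hub₂ b hb)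
  by_cases hb : b = h
  · subst hb
    exact iff_of_true (hub₁ a ha).symm (hub₂ a ha).symm
  obtain ⟨a', rfl⟩ := mem_range ha
  obtain ⟨b', rfl⟩ := mem_range hb
  simpa using congrArg (fun K : SimpleGraph V => K.Adj a' b') heq

theorem bijOn_comap_of_range_eq_compl (hf : Set.range f = {h}ᶜ) :
    Set.BijOn (fun G : SimpleGraph W => G.comap f)
      {G | TwoConnected G ∧ ∀ v, G.Adj h (f v)} {H | H.Connected} := by
  have hh : h ∉ Set.range f := by simp [hf]
  have hub_iff (G : SimpleGraph W) : (∀ v, G.Adj h (f v)) ↔ ∀ w, w ≠ h → G.Adj h w := by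
    refine ⟨fun hub w hw => ?_, fun hub v => hub (f v) fun hv => hh ⟨v, hv⟩⟩
    obtain ⟨v, rfl⟩ : w ∈ Set.range f := hf ▸ hw
    exact hub v
  simp_rw [hub_iff]
  refine ⟨fun G hG => (connected_comap_iff_induce_compl hf G).mpr (hG.1.2 h), ?_, fun H hH => ?_⟩
  · exact fun G₁ hG₁ G₂ hG₂ heq => eq_of_comap_eq_of_forall_adj hf hG₁.2 hG₂.2 heq
  · have hdel : ((cone f h H).induce ({h}ᶜ : Set W)).Connected := by
      rwa [← connected_comap_iff_induce_compl hf, comap_cone hh]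
    exact ⟨cone f h H, ⟨twoConnected_of_forall_adj (cone_adj_apex H) hdel, cone_adj_apex H⟩,
      comap_cone hh H⟩

end SimpleGraph

theorem Fin.range_castSucc_eq_compl_last (n : ℕ) :
    Set.range (Fin.castSucc : Fin n → Fin (n + 1)) = {Fin.last n}ᶜ :=
  Set.ext fun _ => Fin.exists_castSucc_eq

theorem zeta_bijection_general (n : ℕ) :
    Set.BijOn (fun G : SimpleGraph (Fin (n + 1)) => G.comap (Fin.castSucc : Fin n → Fin (n + 1)))
      {G : SimpleGraph (Fin (n + 1)) |
        TwoConnected G ∧ ∀ i : Fin n, G.Adj (Fin.last n) i.castSucc}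
      {H : SimpleGraph (Fin n) | H.Connected} := by
  exact SimpleGraph.bijOn_comap_of_range_eq_compl (f := Fin.castSuccEmb) (Fin.range_castSucc_eq_compl_last n)

/-- The map `ζ` sending a two-connected graph `G` on `[n+1]` in which the last
vertex is adjacent to all other vertices to the graph obtained by deleting the
last vertex and its incident edges is a bijection onto the connected graphs on
`[n]`. -/
theorem zeta_bijection (n : ℕ) (hn : 2 ≤ n) :
    Set.BijOn (fun G : SimpleGraph (Fin (n + 1)) => G.comap (Fin.castSucc : Fin n → Fin (n + 1)))
      {G : SimpleGraph (Fin (n + 1)) |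
        TwoConnected G ∧ ∀ i : Fin n, G.Adj (Fin.last n) i.castSucc}
      {H : SimpleGraph (Fin n) | H.Connected} :=
  zeta_bijection_general n
end

section
/- A graph G with at least k+1 vertices is k-connected if and only if every pair of distinct vertices of G is connected by k pairwise internally disjoint paths (Whitney/Menger). -/
open scoped Classical

/-- A graph is `k`-connected if it has more than `k` vertices and remains
connected after the deletion of any set of fewer than `k` vertices. -/
def KConnected {V : Type*} [Fintype V] (k : ℕ) (G : SimpleGraph V) : Prop :=
  k < Fintype.card V ∧
    ∀ s : Finset V, s.card < k → (G.induce ((↑s : Set V)ᶜ)).Connected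

/-!
Menger's theorem for vertex sets `A`, `B` is proved by Göring's induction on the edges. If some
edge `xy` can be deleted without creating an `A`–`B` separator of fewer than `k` vertices, induction
applies to `G - xy`. Otherwise `G - xy` has an `A`–`B` separator `S` with `|S| = k - 1`, and
`X = S ∪ {x}`, `Y = S ∪ {y}` separate `A` from `B` in `G`. By induction `G - xy` has `k` disjoint
`A`–`X` paths and `k` disjoint `Y`–`B` paths; as `S` separates `A` from `B` in `G - xy`, these meet
only in `S`, at their ends, so they join up, the path ending in `x` through the edge `xy`, into `k`
disjoint `A`–`B` paths of `G`.

For non-adjacent `u`, `v`, Menger's theorem for the neighbourhoods of `u` and `v` in the graph where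
`u` and `v` are isolated gives `k` internally disjoint `u`–`v` paths; for adjacent ones it is
applied to `G - uv` with `k - 1` paths, and the edge `uv` is added. Conversely, fewer than `k`
vertices cannot meet all of `k` internally disjoint `u`–`v` paths.
-/

namespace SimpleGraph

variable {V : Type*} {G H : SimpleGraph V}

namespace Walk

variable {a b c c' u v w z : V}

lemma IsPath.append {p : G.Walk u v} {q : G.Walk v w} (hp : p.IsPath) (hq : q.IsPath)
    (h : ∀ z ∈ p.support, z ∈ q.support → z = v) : (p.append q).IsPath := by
  rw [isPath_def, support_append, List.nodup_append]
  refine ⟨hp.support_nodup, hq.support_nodup.sublist q.support.tail_sublist, ?_⟩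
  rintro z hzp _ hzq rfl
  obtain rfl := h z hzp (List.mem_of_mem_tail hzq)
  have := hq.support_nodup
  rw [← q.cons_tail_support, List.nodup_cons] at this
  exact this.1 hzq

lemma IsPath.eq_of_mem_takeUntil_of_mem_dropUntil {p : G.Walk u v} (hp : p.IsPath)
    (hz : z ∈ p.support) (h₁ : w ∈ (p.takeUntil z hz).support)
    (h₂ : w ∈ (p.dropUntil z hz).support) : w = z := by
  by_contra hne
  have : ((p.takeUntil z hz).append (p.dropUntil z hz)).IsPath := by rwa [p.take_spec hz]
  exact this.ne_of_mem_support_of_append hne h₁ h₂ rfl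

lemma exists_isPath_prefix (X : Set V) (w : G.Walk a b) (hX : ∃ z ∈ w.support, z ∈ X) :
    ∃ z ∈ X, ∃ p : G.Walk a z, p.IsPath ∧ p.support ⊆ w.support ∧
      ∀ t ∈ p.support, t ∈ X → t = z := by
  suffices ∃ z ∈ X, ∃ p : G.Walk a z, p.support ⊆ w.support ∧
      ∀ t ∈ p.support, t ∈ X → t = z by
    obtain ⟨z, hz, p, hsub, hfirst⟩ := this
    exact ⟨z, hz, p.bypass, p.bypass_isPath, fun t ht => hsub (p.support_bypass_subset_support ht),
      fun t ht => hfirst t (p.support_bypass_subset_support ht)⟩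
  induction w with
  | nil =>
    obtain ⟨z, hz, hzX⟩ := hX
    obtain rfl := List.mem_singleton.mp hz
    exact ⟨z, hzX, nil, by simp, by simp⟩
  | @cons a c b h w ih =>
    by_cases ha : a ∈ X
    · exact ⟨a, ha, nil, by simp, by simp⟩
    obtain ⟨z, hz, hzX⟩ := hX
    have hzw : z ∈ w.support := by
      rcases List.mem_cons.mp hz with rfl | hz
      exacts [absurd hzX ha, hz]
    obtain ⟨z', hz', p, hsub, hfirst⟩ := ih ⟨z, hzw, hzX⟩
    refine ⟨z', hz', cons h p, List.cons_subset_cons _ hsub, ?_⟩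
    rintro t ht htX
    rcases List.mem_cons.mp ht with rfl | ht
    exacts [absurd htX ha, hfirst t ht htX]

lemma exists_isPath_of_eq_or_adj {p : G.Walk a c} {q : G.Walk c' b} (hp : p.IsPath)
    (hq : q.IsPath) (hlink : c = c' ∨ G.Adj c c')
    (h : ∀ z ∈ p.support, z ∈ q.support → z = c ∧ z = c') :
    ∃ r : G.Walk a b, r.IsPath ∧ ∀ z, z ∈ r.support ↔ z ∈ p.support ∨ z ∈ q.support := by
  rcases hlink with rfl | hadj
  · exact ⟨p.append q, hp.append hq fun z hzp hzq => (h z hzp hzq).1,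
      fun z => mem_support_append_iff _ _⟩
  have hc : c ∉ q.support := fun hc => hadj.ne (h c p.end_mem_support hc).2
  refine ⟨p.append (cons hadj q), hp.append (hq.cons hc) fun z hzp hzq => ?_, fun z => ?_⟩
  · rcases List.mem_cons.mp hzq with rfl | hzq
    exacts [rfl, (h z hzp hzq).1]
  · rw [mem_support_append_iff, support_cons, List.mem_cons]
    constructor
    · rintro (hz | rfl | hz)
      exacts [.inl hz, .inl p.end_mem_support, .inr hz]
    · rintro (hz | hz)
      exacts [.inl hz, .inr (.inr hz)]

lemma IsPath.exists_interior {p : G.Walk u v} (hp : p.IsPath) (huv : u ≠ v)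
    (hadj : ¬ G.Adj u v) :
    ∃ a b, G.Adj u a ∧ G.Adj v b ∧ ∃ q : G.Walk a b,
      q.support ⊆ p.support ∧ u ∉ q.support ∧ v ∉ q.support := by
  cases p with
  | nil => exact absurd rfl huv
  | @cons _ a _ h p =>
    obtain ⟨hp, hu⟩ := cons_isPath_iff _ _ |>.mp hp
    obtain ⟨b, h', q, hq⟩ := exists_eq_cons_of_ne (fun hva => hadj (by rwa [hva])) p.reverse
    have hrev := hp.reverse
    rw [hq, cons_isPath_iff] at hrev
    have hsub : q.support ⊆ p.support := fun z hz => by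
      have : z ∈ p.reverse.support := by rw [hq]; exact List.mem_cons_of_mem _ hz
      simpa using this
    refine ⟨a, b, h, h', q.reverse, fun z hz => ?_, fun hz => hu ?_, by simpa using hrev.2⟩
    · simpa using .inr (hsub (by simpa using hz))
    · exact hsub (by simpa using hz)

lemma exists_deleteIncidenceSet (w : G.Walk a b) (hz : z ∉ w.support) :
    ∃ w' : (G.deleteIncidenceSet z).Walk a b, w'.support = w.support :=
  ⟨w.transfer _ fun e he => by
    rw [edgeSet_deleteIncidenceSet]
    exact ⟨w.edges_subset_edgeSet he, fun h => hz (w.mem_support_of_mem_edges he h.2)⟩,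
    support_transfer _ _⟩

lemma notMem_support_of_forall_not_adj (w : G.Walk a b) (ha : a ≠ z)
    (hz : ∀ t, ¬ G.Adj t z) : z ∉ w.support := fun h =>
  hz _ ((w.takeUntil z h).adj_penultimate (not_nil_of_ne ha))

end Walk

def IsSeparator (G : SimpleGraph V) (A B : Set V) (S : Finset V) : Prop :=
  ∀ a ∈ A, ∀ b ∈ B, ∀ w : G.Walk a b, ∃ z ∈ w.support, z ∈ S

variable {A A' B B' : Set V} {S T : Finset V} {a b x y : V} {k : ℕ}

lemma not_isSeparator_iff : ¬ G.IsSeparator A B S ↔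
    ∃ a ∈ A, ∃ b ∈ B, ∃ w : G.Walk a b, ∀ z ∈ w.support, z ∉ S := by
  simp [IsSeparator]

lemma not_isSeparator_singleton_iff : ¬ G.IsSeparator {a} {b} S ↔
    ∃ w : G.Walk a b, ∀ z ∈ w.support, z ∉ S := by
  simp [not_isSeparator_iff]

namespace IsSeparator

lemma symm (h : G.IsSeparator A B S) : G.IsSeparator B A S := fun b hb a ha w => by
  simpa using h a ha b hb w.reverse

lemma anti (hA : A' ⊆ A) (hB : B' ⊆ B) (h : G.IsSeparator A B S) : G.IsSeparator A' B' S :=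
  fun a ha b hb => h a (hA ha) b (hB hb)

lemma isSeparator_or (h : G.IsSeparator A B S) (v : V) :
    G.IsSeparator A {v} S ∨ G.IsSeparator {v} B S := by
  refine or_iff_not_imp_left.mpr fun hAv _ hv b hb q => ?_
  obtain ⟨a, ha, _, rfl, p, hp⟩ := not_isSeparator_iff.mp hAv
  obtain rfl := hv
  obtain ⟨z, hz, hzS⟩ := h a ha b hb (p.append q)
  rcases (p.mem_support_append_iff q).mp hz with hz | hz
  exacts [absurd hzS (hp z hz), ⟨z, hz, hzS⟩]

lemma eq_of_mem_support {c c' z : V} (hS : G.IsSeparator A B S) {p : G.Walk a c}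
    {q : G.Walk c' b} (ha : a ∈ A) (hb : b ∈ B) (hp : p.IsPath) (hq : q.IsPath)
    (hpS : ∀ t ∈ p.support, t ∈ S → t = c) (hqS : ∀ t ∈ q.support, t ∈ S → t = c')
    (hzp : z ∈ p.support) (hzq : z ∈ q.support) : z ∈ S ∧ z = c ∧ z = c' := by
  obtain ⟨s, hs, hsS⟩ := hS a ha b hb ((p.takeUntil z hzp).append (q.dropUntil z hzq))
  rcases (Walk.mem_support_append_iff _ _).mp hs with hs | hs
  · obtain rfl := hpS s (p.support_takeUntil_subset_support hzp hs) hsS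
    have hz := (hp.eq_of_mem_takeUntil_of_mem_dropUntil hzp hs (Walk.end_mem_support _)).symm
    exact ⟨hz ▸ hsS, hz, hqS z hzq (hz ▸ hsS)⟩
  · obtain rfl := hqS s (q.support_dropUntil_subset_support hzq hs) hsS
    have hz := (hq.eq_of_mem_takeUntil_of_mem_dropUntil hzq (Walk.start_mem_support _) hs).symm
    exact ⟨hz ▸ hsS, hpS z hzp (hz ▸ hsS), hz⟩

lemma insert_of_deleteEdges (h : (G.deleteEdges {s(x, y)}).IsSeparator A B S) :
    G.IsSeparator A B (insert x S) := fun a ha b hb w => by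
  by_cases he : s(x, y) ∈ w.edges
  · exact ⟨x, w.fst_mem_support_of_mem_edges he, Finset.mem_insert_self x S⟩
  · obtain ⟨z, hz, hzS⟩ := h a ha b hb (w.toDeleteEdge _ he)
    exact ⟨z, by simpa using hz, Finset.mem_insert_of_mem hzS⟩

/-- An `A`–`B` walk of `G` first meets `S ∪ {x, y}` along a walk of `G - xy`; it cannot first meet
it in `y`, from where `B` is reachable avoiding `S`. -/
lemma of_deleteEdges_insert (hxy : x ≠ y) (hS : (G.deleteEdges {s(x, y)}).IsSeparator A B S)
    (hy : ¬ (G.deleteEdges {s(x, y)}).IsSeparator {y} B S)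
    (hT : (G.deleteEdges {s(x, y)}).IsSeparator A ↑(insert x S) T) : G.IsSeparator A B T := by
  intro a ha b hb w
  obtain ⟨y', hy', b', hb', q, hq⟩ := not_isSeparator_iff.mp hy
  rw [Set.mem_singleton_iff] at hy'
  subst y'
  obtain ⟨z, hz, p, -, hsub, hfirst⟩ := w.exists_isPath_prefix (insert y ↑(insert x S)) <| by
    obtain ⟨z, hz, hzS⟩ := hS.insert_of_deleteEdges a ha b hb w
    exact ⟨z, hz, Set.mem_insert_of_mem _ hzS⟩
  have he : s(x, y) ∉ p.edges := fun he =>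
    hxy ((hfirst x (p.fst_mem_support_of_mem_edges he) (by simp)).trans
      (hfirst y (p.snd_mem_support_of_mem_edges he) (by simp)).symm)
  rcases hz with hz | hz
  · subst z
    exfalso
    obtain ⟨t, ht, htS⟩ := hS a ha b' hb' ((p.toDeleteEdge _ he).append q)
    rcases (Walk.mem_support_append_iff _ _).mp ht with ht | ht
    · obtain rfl := hfirst t (by simpa using ht) (by simp [htS])
      exact hq _ q.start_mem_support htS
    · exact hq t ht htS
  · obtain ⟨t, ht, htT⟩ := hT a ha z hz (p.toDeleteEdge _ he)
    exact ⟨t, hsub (by simpa using ht), htT⟩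

end IsSeparator

/-- `w` leaves the set of vertices reachable from `A` in `G - xy` avoiding `S` through the edge
`xy`. -/
lemma exists_mem_not_isSeparator_deleteEdges (w : G.Walk a b) (ha : a ∈ A)
    (hw : ∀ z ∈ w.support, z ∉ S) (hb : (G.deleteEdges {s(x, y)}).IsSeparator A {b} S) :
    ∃ p ∈ s(x, y), ¬ (G.deleteEdges {s(x, y)}).IsSeparator A {p} S := by
  obtain ⟨d, hd, hp, hq⟩ := w.exists_boundary_dart
    {v | ¬ (G.deleteEdges {s(x, y)}).IsSeparator A {v} S}
    (not_isSeparator_iff.mpr ⟨a, ha, a, rfl, .nil, by simpa using hw a w.start_mem_support⟩)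
    (by simpa using hb)
  refine ⟨d.fst, ?_, hp⟩
  by_contra hne
  obtain ⟨a', ha', _, rfl, p, hpS⟩ := not_isSeparator_iff.mp hp
  have hadj : (G.deleteEdges {s(x, y)}).Adj d.fst d.snd :=
    (deleteEdges_adj ..).mpr
      ⟨d.adj, fun h => hne (Set.mem_singleton_iff.mp h ▸ Sym2.mem_mk_left _ _)⟩
  refine hq (not_isSeparator_iff.mpr ⟨a', ha', d.snd, rfl, p.concat hadj, fun z hz => ?_⟩)
  rw [Walk.support_concat, List.mem_append, List.mem_singleton] at hz
  rcases hz with hz | rfl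
  exacts [hpS z hz, hw _ (w.dart_snd_mem_support_of_mem_darts hd)]

lemma IsSeparator.exists_not_isSeparator_deleteEdges
    (hS : (G.deleteEdges {s(x, y)}).IsSeparator A B S) (hG : ¬ G.IsSeparator A B S) :
    ∃ p q, s(p, q) = s(x, y) ∧ ¬ (G.deleteEdges {s(x, y)}).IsSeparator A {p} S ∧
      ¬ (G.deleteEdges {s(x, y)}).IsSeparator {q} B S := by
  obtain ⟨a, ha, b, hb, w, hw⟩ := not_isSeparator_iff.mp hG
  obtain ⟨p, hp, hAp⟩ := exists_mem_not_isSeparator_deleteEdges w ha hw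
    (hS.anti subset_rfl (Set.singleton_subset_iff.mpr hb))
  obtain ⟨q, hq, hBq⟩ := exists_mem_not_isSeparator_deleteEdges w.reverse hb (by simpa using hw)
    (hS.symm.anti subset_rfl (Set.singleton_subset_iff.mpr ha))
  have hpq : p ≠ q := by
    rintro rfl
    exact (hS.isSeparator_or p).elim hAp fun h => hBq h.symm
  exact ⟨p, q, ((Sym2.mem_and_mem_iff hpq).mp ⟨hp, hq⟩).symm, hAp, fun h => hBq h.symm⟩

structure DisjointPaths (G : SimpleGraph V) (A B : Set V) (k : ℕ) where
  src : Fin k → V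
  tgt : Fin k → V
  walk (i : Fin k) : G.Walk (src i) (tgt i)
  src_mem (i : Fin k) : src i ∈ A
  tgt_mem (i : Fin k) : tgt i ∈ B
  isPath (i : Fin k) : (walk i).IsPath
  disjoint : Pairwise fun i j => (walk i).support.Disjoint (walk j).support

namespace DisjointPaths

def ofEmbedding (f : Fin k ↪ V) (hA : ∀ i, f i ∈ A) (hB : ∀ i, f i ∈ B) :
    G.DisjointPaths A B k where
  src := f
  tgt := f
  walk _ := .nil
  src_mem := hA
  tgt_mem := hB
  isPath _ := .nil
  disjoint i j hij := by simpa using hij.symm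

def mono (P : G.DisjointPaths A B k) (h : G ≤ H) : H.DisjointPaths A B k where
  src := P.src
  tgt := P.tgt
  walk i := (P.walk i).mapLe h
  src_mem := P.src_mem
  tgt_mem := P.tgt_mem
  isPath i := (P.isPath i).mapLe h
  disjoint i j hij := by simpa [Walk.support_mapLe_eq_support] using P.disjoint hij

def reverse (P : G.DisjointPaths A B k) : G.DisjointPaths B A k where
  src := P.tgt
  tgt := P.src
  walk i := (P.walk i).reverse
  src_mem := P.tgt_mem
  tgt_mem := P.src_mem
  isPath i := (P.isPath i).reverse
  disjoint i j hij := by simpa using P.disjoint hij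

lemma src_injective (P : G.DisjointPaths A B k) : Function.Injective P.src := fun i j h => by
  by_contra hij
  refine P.disjoint hij (P.walk i).start_mem_support ?_
  rw [h]
  exact (P.walk j).start_mem_support

lemma tgt_injective (P : G.DisjointPaths A B k) : Function.Injective P.tgt := fun i j h => by
  by_contra hij
  refine P.disjoint hij (P.walk i).end_mem_support ?_
  rw [h]
  exact (P.walk j).end_mem_support

lemma exists_src_eq {Y : Finset V} (Q : G.DisjointPaths Y B k) (hY : Y.card ≤ k)
    (hy : y ∈ Y) : ∃ j, Q.src j = y := by
  obtain ⟨j, -, hj⟩ := Finset.surj_on_of_inj_on_of_card_le (s := Finset.univ)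
    (fun j _ => Q.src j) (fun j _ => Q.src_mem j) (fun i j _ _ h => Q.src_injective h)
    (by simpa using hY) y hy
  exact ⟨j, hj.symm⟩

lemma exists_forall_mem_eq_tgt (P : G.DisjointPaths A B k) :
    ∃ P' : G.DisjointPaths A B k, ∀ i, ∀ z ∈ (P'.walk i).support, z ∈ B → z = P'.tgt i := by
  choose z hz p hp hsub hfirst using fun i =>
    (P.walk i).exists_isPath_prefix B ⟨_, (P.walk i).end_mem_support, P.tgt_mem i⟩
  exact ⟨⟨P.src, z, p, P.src_mem, hz, hp,
    fun i j hij t hi hj => P.disjoint hij (hsub i hi) (hsub j hj)⟩, hfirst⟩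

lemma nonempty_of_eq_or_adj {X Y : Set V} (P : G.DisjointPaths A X k)
    (Q : G.DisjointPaths Y B k) (π : Fin k → Fin k) (hπ : π.Injective)
    (hlink : ∀ i, P.tgt i = Q.src (π i) ∨ G.Adj (P.tgt i) (Q.src (π i)))
    (hcross : ∀ i j z, z ∈ (P.walk i).support → z ∈ (Q.walk j).support →
      j = π i ∧ z = P.tgt i ∧ z = Q.src j) :
    Nonempty (G.DisjointPaths A B k) := by
  choose R hR hRsupp using fun i => Walk.exists_isPath_of_eq_or_adj (P.isPath i)
    (Q.isPath (π i)) (hlink i) fun z hzp hzq => (hcross i (π i) z hzp hzq).2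
  refine ⟨⟨P.src, fun i => Q.tgt (π i), R, P.src_mem, fun i => Q.tgt_mem _, hR,
    fun i j hij z hzi hzj => ?_⟩⟩
  rw [hRsupp] at hzi hzj
  rcases hzi with hzi | hzi <;> rcases hzj with hzj | hzj
  · exact P.disjoint hij hzi hzj
  · exact hij (hπ (hcross i (π j) z hzi hzj).1).symm
  · exact hij (hπ (hcross j (π i) z hzj hzi).1)
  · exact Q.disjoint (hπ.ne hij) hzi hzj

end DisjointPaths

/-- The path of `P` ending in `x` is continued through `xy` by the path of `Q` starting in `y`; the
others are continued by the path of `Q` starting where they end. -/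
lemma nonempty_disjointPaths_of_deleteEdges_insert (hxy : G.Adj x y) (hxS : x ∉ S)
    (hyS : y ∉ S) (hcard : S.card + 1 = k) (hS : (G.deleteEdges {s(x, y)}).IsSeparator A B S)
    (P : (G.deleteEdges {s(x, y)}).DisjointPaths A ↑(insert x S) k)
    (hP : ∀ i, ∀ z ∈ (P.walk i).support, z ∈ S → z = P.tgt i)
    (Q : (G.deleteEdges {s(x, y)}).DisjointPaths ↑(insert y S) B k)
    (hQ : ∀ j, ∀ z ∈ (Q.walk j).support, z ∈ S → z = Q.src j) :
    Nonempty (G.DisjointPaths A B k) := by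
  have hswap_S {z} (hz : z ∈ S) : Equiv.swap x y z = z :=
    Equiv.swap_apply_of_ne_of_ne (ne_of_mem_of_not_mem hz hxS) (ne_of_mem_of_not_mem hz hyS)
  have hswap i : Equiv.swap x y (P.tgt i) ∈ insert y S := by
    rcases Finset.mem_insert.mp (P.tgt_mem i) with h | h
    · simp [h]
    · simp [hswap_S h, h]
  choose π hπ using fun i =>
    Q.exists_src_eq (by rw [Finset.card_insert_of_notMem hyS, hcard]) (hswap i)
  refine (P.mono (deleteEdges_le _)).nonempty_of_eq_or_adj (Q.mono (deleteEdges_le _)) π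
    (fun i j h => P.tgt_injective ((Equiv.swap x y).injective ?_)) (fun i => ?_)
    (fun i j z hzi hzj => ?_)
  · rw [← hπ, ← hπ, h]
  · rcases Finset.mem_insert.mp (P.tgt_mem i) with h | h
    · right
      simpa [DisjointPaths.mono, hπ, h] using hxy
    · left
      simp [DisjointPaths.mono, hπ, hswap_S h]
  · simp only [DisjointPaths.mono, Walk.support_mapLe_eq_support] at hzi hzj
    obtain ⟨hzS, hzi, hzj⟩ := hS.eq_of_mem_support (P.src_mem i) (Q.tgt_mem j) (P.isPath i)
      (Q.isPath j) (hP i) (hQ j) hzi hzj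
    refine ⟨Q.src_injective ?_, hzi, hzj⟩
    rw [hπ, ← hzi, ← hzj, hswap_S hzS]

lemma nonempty_disjointPaths_of_not_isSeparator (hxy : G.Adj x y) (hxS : x ∉ S) (hyS : y ∉ S)
    (hcard : S.card + 1 = k) (hk : ∀ T, G.IsSeparator A B T → k ≤ T.card)
    (hS : (G.deleteEdges {s(x, y)}).IsSeparator A B S)
    (hx : ¬ (G.deleteEdges {s(x, y)}).IsSeparator A {x} S)
    (hy : ¬ (G.deleteEdges {s(x, y)}).IsSeparator {y} B S)
    (ih : ∀ A' B' : Set V, (∀ T, (G.deleteEdges {s(x, y)}).IsSeparator A' B' T → k ≤ T.card) →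
      Nonempty ((G.deleteEdges {s(x, y)}).DisjointPaths A' B' k)) :
    Nonempty (G.DisjointPaths A B k) := by
  have e : s(y, x) = s(x, y) := Sym2.eq_swap
  obtain ⟨P₀⟩ := ih A ↑(insert x S) fun T hT => hk T (hS.of_deleteEdges_insert hxy.ne hy hT)
  obtain ⟨Q₀⟩ := ih ↑(insert y S) B fun T hT => hk T <|
    (IsSeparator.of_deleteEdges_insert (x := y) (y := x) hxy.ne.symm (e ▸ hS.symm)
      (e ▸ fun h => hx h.symm) (e ▸ hT.symm)).symm
  obtain ⟨P, hP⟩ := P₀.exists_forall_mem_eq_tgt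
  obtain ⟨Q, hQ⟩ := Q₀.reverse.exists_forall_mem_eq_tgt
  refine nonempty_disjointPaths_of_deleteEdges_insert hxy hxS hyS hcard hS P
    (fun i z hz hzS => hP i z hz (by simp [hzS])) Q.reverse fun j z hz hzS => ?_
  simpa [DisjointPaths.reverse] using hQ j z (by simpa [DisjointPaths.reverse] using hz)
    (by simp [hzS])

lemma nonempty_disjointPaths_of_isSeparator_deleteEdges (hxy : G.Adj x y)
    (hk : ∀ T, G.IsSeparator A B T → k ≤ T.card)
    (hS : (G.deleteEdges {s(x, y)}).IsSeparator A B S) (hSk : S.card < k)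
    (ih : ∀ A' B' : Set V, (∀ T, (G.deleteEdges {s(x, y)}).IsSeparator A' B' T → k ≤ T.card) →
      Nonempty ((G.deleteEdges {s(x, y)}).DisjointPaths A' B' k)) :
    Nonempty (G.DisjointPaths A B k) := by
  have e : s(y, x) = s(x, y) := Sym2.eq_swap
  have hmin {v} (hv : G.IsSeparator A B (insert v S)) : v ∉ S ∧ S.card + 1 = k := by
    have hvS : v ∉ S := fun h => by
      have := hk _ hv
      rw [Finset.insert_eq_of_mem h] at this
      omega
    have := hk _ hv
    rw [Finset.card_insert_of_notMem hvS] at this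
    exact ⟨hvS, by omega⟩
  obtain ⟨hxS, hcard⟩ := hmin hS.insert_of_deleteEdges
  obtain ⟨hyS, -⟩ := hmin (e ▸ hS).insert_of_deleteEdges
  obtain ⟨p, q, hpq, hp, hq⟩ :=
    hS.exists_not_isSeparator_deleteEdges fun h => (hk S h).not_gt hSk
  rcases Sym2.eq_iff.mp hpq with ⟨rfl, rfl⟩ | ⟨rfl, rfl⟩
  · exact nonempty_disjointPaths_of_not_isSeparator hxy hxS hyS hcard hk hS hp hq ih
  · rw [← e] at hS hp hq ih
    exact nonempty_disjointPaths_of_not_isSeparator hxy.symm hyS hxS hcard hk hS hp hq ih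

lemma nonempty_disjointPaths_bot [Finite V]
    (h : ∀ S, (⊥ : SimpleGraph V).IsSeparator A B S → k ≤ S.card) :
    Nonempty ((⊥ : SimpleGraph V).DisjointPaths A B k) := by
  let s := (Set.toFinite (A ∩ B)).toFinset
  have hs : (⊥ : SimpleGraph V).IsSeparator A B s := fun a ha b hb w => by
    cases w with
    | nil => exact ⟨a, by simp, by simp [s, ha, hb]⟩
    | cons h _ => exact h.elim
  obtain ⟨f⟩ := Function.Embedding.nonempty_of_card_le (α := Fin k) (β := s)
    (by simpa using h s hs)
  have hf i : (f i : V) ∈ A ∩ B := (Set.Finite.mem_toFinset _).mp (f i).2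
  exact ⟨.ofEmbedding (f.trans (Function.Embedding.subtype _)) (fun i => (hf i).1)
    fun i => (hf i).2⟩

theorem menger [Finite V] (h : ∀ S, G.IsSeparator A B S → k ≤ S.card) :
    Nonempty (G.DisjointPaths A B k) := by
  induction G using WellFoundedLT.induction generalizing A B with
  | _ G ih =>
    obtain hG | ⟨e, he⟩ := G.edgeSet.eq_empty_or_nonempty
    · rw [edgeSet_eq_empty] at hG
      subst hG
      exact nonempty_disjointPaths_bot h
    obtain ⟨x, y⟩ := e
    have hlt : G.deleteEdges {s(x, y)} < G := (deleteEdges_le _).lt_of_ne fun h =>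
      Set.disjoint_left.mp (deleteEdges_eq_self.mp h) he rfl
    by_cases hsmall : ∃ S, (G.deleteEdges {s(x, y)}).IsSeparator A B S ∧ S.card < k
    · obtain ⟨S, hS, hSk⟩ := hsmall
      exact nonempty_disjointPaths_of_isSeparator_deleteEdges he h hS hSk fun _ _ => ih _ hlt
    · push Not at hsmall
      exact (ih _ hlt hsmall).map (·.mono (deleteEdges_le _))

def HasInternallyDisjointPaths (G : SimpleGraph V) (u v : V) (k : ℕ) : Prop :=
  ∃ P : Fin k → G.Walk u v, (∀ i, (P i).IsPath) ∧
    ∀ i j, i ≠ j → ∀ x, x ∈ (P i).support → x ∈ (P j).support → x = u ∨ x = v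

variable {u v : V}

namespace HasInternallyDisjointPaths

lemma mono (h : G.HasInternallyDisjointPaths u v k) (hGH : G ≤ H) :
    H.HasInternallyDisjointPaths u v k := by
  obtain ⟨P, hP, hdisj⟩ := h
  exact ⟨fun i => (P i).mapLe hGH, fun i => (hP i).mapLe hGH, by simpa using hdisj⟩

lemma succ_of_adj (h : G.HasInternallyDisjointPaths u v k) (huv : G.Adj u v) :
    G.HasInternallyDisjointPaths u v (k + 1) := by
  obtain ⟨P, hP, hdisj⟩ := h
  have hedge : ∀ z ∈ (Walk.cons huv .nil : G.Walk u v).support, z = u ∨ z = v := by simp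
  refine ⟨Fin.cons (.cons huv .nil) P, Fin.cases (by simp [huv.ne]) hP,
    fun i j hij z hzi hzj => ?_⟩
  cases i using Fin.cases with
  | zero => exact hedge z hzi
  | succ i =>
    cases j using Fin.cases with
    | zero => exact hedge z hzj
    | succ j => exact hdisj i j (fun h => hij (h ▸ rfl)) z hzi hzj

lemma le_card (h : G.HasInternallyDisjointPaths u v k) (hu : u ∉ S) (hv : v ∉ S)
    (hS : G.IsSeparator {u} {v} S) : k ≤ S.card := by
  obtain ⟨P, -, hdisj⟩ := h
  choose f hfP hfS using fun i => hS u rfl v rfl (P i)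
  have hf : Function.Injective f := fun i j hij => by
    by_contra hne
    rcases hdisj i j hne (f i) (hfP i) (hij ▸ hfP j) with h | h
    exacts [hu (h ▸ hfS i), hv (h ▸ hfS i)]
  simpa using Finset.card_le_card_of_injOn (s := Finset.univ) f (fun i _ => hfS i) hf.injOn

end HasInternallyDisjointPaths

lemma IsSeparator.erase_of_deleteIncidenceSet (huv : u ≠ v) (hadj : ¬ G.Adj u v)
    (hT : ((G.deleteIncidenceSet u).deleteIncidenceSet v).IsSeparator
      (G.neighborSet u) (G.neighborSet v) T) :
    G.IsSeparator {u} {v} ((T.erase u).erase v) := by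
  intro a ha b hb w
  rw [Set.mem_singleton_iff] at ha hb
  subst a b
  obtain ⟨a, b, ha, hb, q, hsub, hu, hv⟩ := w.bypass_isPath.exists_interior huv hadj
  obtain ⟨q₁, hq₁⟩ := q.exists_deleteIncidenceSet hu
  obtain ⟨q₂, hq₂⟩ := q₁.exists_deleteIncidenceSet (hq₁ ▸ hv)
  obtain ⟨z, hz, hzT⟩ := hT a ha b hb q₂
  rw [hq₂, hq₁] at hz
  exact ⟨z, w.support_bypass_subset_support (hsub hz),
    by simp [hzT, ne_of_mem_of_not_mem hz hu, ne_of_mem_of_not_mem hz hv]⟩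

lemma DisjointPaths.hasInternallyDisjointPaths (huv : u ≠ v) (hadj : ¬ G.Adj u v)
    (P : ((G.deleteIncidenceSet u).deleteIncidenceSet v).DisjointPaths
      (G.neighborSet u) (G.neighborSet v) k) :
    G.HasInternallyDisjointPaths u v k := by
  have hHG : (G.deleteIncidenceSet u).deleteIncidenceSet v ≤ G :=
    (deleteIncidenceSet_le _ _).trans (deleteIncidenceSet_le _ _)
  have hiso {z} (hz : z = u ∨ z = v) t :
      ¬ ((G.deleteIncidenceSet u).deleteIncidenceSet v).Adj t z := by
    rcases hz with rfl | rfl <;> simp [deleteIncidenceSet_adj]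
  have hsrc i : G.Adj u (P.src i) := P.src_mem i
  have htgt i : G.Adj (P.tgt i) v := (P.tgt_mem i).symm
  have hu i : u ∉ (P.walk i).support :=
    (P.walk i).notMem_support_of_forall_not_adj (hsrc i).ne.symm (hiso (.inl rfl))
  have hv i : v ∉ (P.walk i).support :=
    (P.walk i).notMem_support_of_forall_not_adj (fun h => hadj (h ▸ hsrc i)) (hiso (.inr rfl))
  refine ⟨fun i => .cons (hsrc i) (((P.walk i).mapLe hHG).concat (htgt i)),
    fun i => ?_, fun i j hij z hzi hzj => ?_⟩
  · exact ((P.isPath i).mapLe hHG |>.concat (by simpa using hv i) _).cons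
      (by simpa [huv] using hu i)
  · simp only [Walk.support_cons, Walk.support_concat, Walk.support_mapLe_eq_support,
      List.mem_cons, List.mem_append, List.not_mem_nil, or_false] at hzi hzj
    rcases hzi with hzi | hzi | hzi
    · exact .inl hzi
    · rcases hzj with hzj | hzj | hzj
      exacts [.inl hzj, (P.disjoint hij hzi hzj).elim, .inr hzj]
    · exact .inr hzi

theorem hasInternallyDisjointPaths_of_not_adj [Finite V] (huv : u ≠ v) (hadj : ¬ G.Adj u v)
    (h : ∀ S : Finset V, u ∉ S → v ∉ S → G.IsSeparator {u} {v} S → k ≤ S.card) :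
    G.HasInternallyDisjointPaths u v k := by
  obtain ⟨P⟩ := menger (G := (G.deleteIncidenceSet u).deleteIncidenceSet v)
    (A := G.neighborSet u) (B := G.neighborSet v) fun T hT =>
      (h _ (by simp) (by simp) (hT.erase_of_deleteIncidenceSet huv hadj)).trans
        (Finset.card_erase_le.trans Finset.card_erase_le)
  exact P.hasInternallyDisjointPaths huv hadj

lemma preconnected_induce_compl_iff : (G.induce (↑S : Set V)ᶜ).Preconnected ↔
    ∀ a b, a ∉ S → b ∉ S → ¬ G.IsSeparator {a} {b} S := by
  refine ⟨fun h a b ha hb => ?_, fun h ⟨a, ha⟩ ⟨b, hb⟩ => ?_⟩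
  · obtain ⟨W⟩ := h ⟨a, by simpa using ha⟩ ⟨b, by simpa using hb⟩
    refine not_isSeparator_singleton_iff.mpr ⟨W.map (Embedding.induce _).toHom, fun z hz => ?_⟩
    obtain ⟨z, -, rfl⟩ := List.mem_map.mp ((W.support_map _) ▸ hz)
    exact z.2
  · obtain ⟨w, hw⟩ :=
      not_isSeparator_singleton_iff.mp (h a b (by simpa using ha) (by simpa using hb))
    exact ⟨w.induce _ fun z hz => by simpa using hw z hz⟩

end SimpleGraph

namespace KConnected

open SimpleGraph

variable {V : Type*} [Fintype V] {G : SimpleGraph V} {k : ℕ} {S : Finset V} {u v : V}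

lemma not_isSeparator (hG : KConnected k G) (hS : S.card < k) (hu : u ∉ S) (hv : v ∉ S) :
    ¬ G.IsSeparator {u} {v} S :=
  preconnected_induce_compl_iff.mp (hG.2 S hS).preconnected u v hu hv

/-- A vertex `w` outside `S ∪ {u, v}` is joined to `v` avoiding `S ∪ {u}` and to `u` avoiding
`S ∪ {v}`; together these give a `u`–`v` walk of `G - uv` avoiding `S`. -/
lemma le_card_of_isSeparator_deleteEdges (hG : KConnected (k + 1) G) (huv : u ≠ v)
    (hu : u ∉ S) (hv : v ∉ S) (hS : (G.deleteEdges {s(u, v)}).IsSeparator {u} {v} S) :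
    k ≤ S.card := by
  by_contra! hlt
  obtain ⟨w, -, hw⟩ := Finset.exists_mem_notMem_of_card_lt_card
    (s := insert u (insert v S)) (t := Finset.univ) <| by
      have := Finset.card_insert_le u (insert v S)
      have := Finset.card_insert_le v S
      have := hG.1
      rw [Finset.card_univ]
      omega
  simp only [Finset.mem_insert, not_or] at hw
  obtain ⟨p, hp⟩ := not_isSeparator_singleton_iff.mp <|
    hG.not_isSeparator (S := insert u S) (u := w) (v := v)
      ((Finset.card_insert_le _ _).trans_lt (by omega)) (by simp [hw.1, hw.2.2])
      (by simp [huv.symm, hv])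
  obtain ⟨q, hq⟩ := not_isSeparator_singleton_iff.mp <|
    hG.not_isSeparator (S := insert v S) (u := w) (v := u)
      ((Finset.card_insert_le _ _).trans_lt (by omega)) (by simp [hw.2.1, hw.2.2])
      (by simp [huv, hu])
  have he : s(u, v) ∉ (q.reverse.append p).edges := by
    rw [Walk.edges_append, Walk.edges_reverse, List.mem_append, List.mem_reverse]
    rintro (h | h)
    · exact hq v (q.snd_mem_support_of_mem_edges h) (by simp)
    · exact hp u (p.fst_mem_support_of_mem_edges h) (by simp)
  obtain ⟨z, hz, hzS⟩ := hS u rfl v rfl ((q.reverse.append p).toDeleteEdge _ he)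
  simp only [Walk.support_transfer, Walk.mem_support_append_iff, Walk.support_reverse,
    List.mem_reverse] at hz
  rcases hz with hz | hz
  exacts [hq z hz (Finset.mem_insert_of_mem hzS), hp z hz (Finset.mem_insert_of_mem hzS)]

theorem hasInternallyDisjointPaths (hG : KConnected k G) (huv : u ≠ v) :
    G.HasInternallyDisjointPaths u v k := by
  by_cases hadj : G.Adj u v
  · obtain _ | k := k
    · exact ⟨finZeroElim, finZeroElim, finZeroElim⟩
    exact (hasInternallyDisjointPaths_of_not_adj huv (by simp) fun S hu hv hS =>
      hG.le_card_of_isSeparator_deleteEdges huv hu hv hS).mono (deleteEdges_le _)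
      |>.succ_of_adj hadj
  · exact hasInternallyDisjointPaths_of_not_adj huv hadj fun S hu hv hS =>
      not_lt.mp fun hlt => hG.not_isSeparator hlt hu hv hS

lemma of_forall_hasInternallyDisjointPaths (hk : k < Fintype.card V)
    (h : ∀ u v, u ≠ v → G.HasInternallyDisjointPaths u v k) : KConnected k G := by
  refine ⟨hk, fun S hS => (connected_iff _).mpr ⟨preconnected_induce_compl_iff.mpr
    fun a b ha hb hab => ?_, ?_⟩⟩
  · rcases eq_or_ne a b with rfl | hne
    · obtain ⟨z, hz, hzS⟩ := hab a rfl a rfl .nil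
      rw [Walk.support_nil, List.mem_singleton] at hz
      exact ha (hz ▸ hzS)
    · exact ((h a b hne).le_card ha hb hab).not_gt hS
  · obtain ⟨x, -, hx⟩ := Finset.exists_mem_notMem_of_card_lt_card (t := Finset.univ)
      (hS.trans_le (by simpa using hk.le))
    exact ⟨⟨x, by simpa using hx⟩⟩

end KConnected

/-- Whitney/Menger: a graph with at least `k+1` vertices is `k`-connected if
and only if every pair of distinct vertices is joined by `k` pairwise
internally disjoint paths. -/
theorem whitney_menger {V : Type*} [Fintype V] (k : ℕ) (G : SimpleGraph V)
    (hcard : k + 1 ≤ Fintype.card V) :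
    KConnected k G ↔
      ∀ u v : V, u ≠ v → ∃ P : Fin k → G.Walk u v,
        (∀ i, (P i).IsPath) ∧
        ∀ i j, i ≠ j →
          ∀ x, x ∈ (P i).support → x ∈ (P j).support → x = u ∨ x = v :=
  ⟨fun hG _ _ huv => hG.hasInternallyDisjointPaths huv,
    KConnected.of_forall_hasInternallyDisjointPaths hcard⟩
end

section
/- Let G be a two-connected graph on [n] such that vertex n is not adjacent to some vertex in [n-1]. Then there exist a vertex a ∈ [n-1] that is not a neighbor of n and two internally disjoint paths from a to n, each meeting the neighborhood N_G(n) in exactly one vertex; in particular G has a (G,n)-permissible edge (a pair of distinct vertices in N_G(n) arising as those intersection vertices). -/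
open scoped Classical

/-!
Let `t` be the last vertex and `w` a non-neighbour of it. Walk from `w` towards `t` and stop at
the first neighbour `u` of `t`; by two-connectivity, walk again from `w` towards `t` avoiding `u`
and stop at the first neighbour `v`. Going back from `u` along the first path, let `a` be the
first vertex lying on the second one. The two segments `a ⋯ u` and `a ⋯ v` meet only at `a`, and
each meets the neighbourhood of `t` only at its end; closing them with the edges `ut` and `vt`
gives the two paths. Since `a` lies on the second path it differs from `u`, so it is not a
neighbour of `t`.
-/

namespace SimpleGraph

variable {V : Type*} {G : SimpleGraph V}

namespace Walk

theorem exists_isPath_to_first_mem (S : Set V) {x y : V} (p : G.Walk x y) (hy : y ∈ S) :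
    ∃ a ∈ S, ∃ q : G.Walk x a, q.IsPath ∧ q.support ⊆ p.support ∧
      ∀ z ∈ q.support, z ∈ S → z = a := by
  induction p with
  | nil => exact ⟨_, hy, .nil, .nil, List.Subset.refl _, by simp⟩
  | @cons x y' y hxy p ih =>
    by_cases hx : x ∈ S
    · exact ⟨x, hx, .nil, .nil, by simp, by simp⟩
    obtain ⟨a, ha, q, -, hqp, hqS⟩ := ih hy
    have hqp : (cons hxy q).support ⊆ (cons hxy p).support := by
      simpa using List.cons_subset_cons x hqp
    refine ⟨a, ha, (cons hxy q).bypass, bypass_isPath _,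
      List.Subset.trans (support_bypass_subset_support _) hqp, ?_⟩
    intro z hz hzS
    rcases List.mem_cons.mp (support_bypass_subset_support _ hz) with rfl | hz
    · exact absurd hzS hx
    · exact hqS z hz hzS

theorem exists_isPath_to_first_adj {x t : V} (p : G.Walk x t) (hx : x ≠ t) :
    ∃ u, G.Adj t u ∧ ∃ q : G.Walk x u, q.IsPath ∧ q.support ⊆ p.support ∧
      t ∉ q.support ∧ ∀ z ∈ q.support, G.Adj t z → z = u := by
  have hr : p.reverse.bypass.IsPath := bypass_isPath _
  have hrp : p.reverse.bypass.support ⊆ p.support := fun z hz => by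
    simpa using support_bypass_subset_support _ hz
  -- a path from `t` leaves `t` through a neighbour and never returns
  generalize p.reverse.bypass = r at hr hrp
  cases r with
  | nil => exact absurd rfl hx
  | cons htu r =>
    rw [cons_isPath_iff] at hr
    obtain ⟨u, hu, q, hq, hqr, hqS⟩ := exists_isPath_to_first_mem _ r.reverse
      (mem_neighborSet G _ _ |>.mpr htu)
    have hqr : q.support ⊆ r.support := fun z hz => by simpa using hqr hz
    exact ⟨u, hu, q, hq, fun z hz => hrp (by simp [hqr hz]), fun h => hr.2 (hqr h), hqS⟩

theorem exists_isPath_pair_meeting_only_at_start {w u v : V} (P : G.Walk w u) {Q : G.Walk w v}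
    (hQ : Q.IsPath) :
    ∃ a, ∃ (p : G.Walk a u) (q : G.Walk a v), p.IsPath ∧ q.IsPath ∧
      p.support ⊆ P.support ∧ q.support ⊆ Q.support ∧
      ∀ z ∈ p.support, z ∈ q.support → z = a := by
  obtain ⟨a, ha, r, hr, hrP, hrQ⟩ :=
    exists_isPath_to_first_mem {z | z ∈ Q.support} P.reverse Q.start_mem_support
  refine ⟨a, r.reverse, Q.dropUntil a ha, hr.reverse, hQ.dropUntil ha,
    fun z hz => by simpa using hrP (by simpa using hz), support_dropUntil_subset_support _ ha, ?_⟩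
  intro z hzr hzQ
  exact hrQ z (by simpa using hzr) (support_dropUntil_subset_support _ ha hzQ)

theorem eq_of_adj_of_mem_support_concat {a u t : V} {p : G.Walk a u} (hut : G.Adj u t)
    (hp : ∀ z ∈ p.support, G.Adj t z → z = u) :
    ∀ z ∈ (p.concat hut).support, G.Adj t z → z = u := by
  intro z hz htz
  rw [support_concat, List.mem_append, List.mem_singleton] at hz
  rcases hz with hz | rfl
  · exact hp z hz htz
  · exact absurd htz (G.irrefl)

end Walk

theorem Connected.exists_walk_notMem_support {u x y : V} (h : (G.induce ({u}ᶜ : Set V)).Connected)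
    (hx : x ≠ u) (hy : y ≠ u) : ∃ p : G.Walk x y, u ∉ p.support := by
  obtain ⟨p⟩ := h.preconnected ⟨x, hx⟩ ⟨y, hy⟩
  refine ⟨p.map (Embedding.induce _).toHom, fun hu => ?_⟩
  obtain ⟨z, -, hz⟩ := List.mem_map.mp ((Walk.support_map _ _) ▸ hu)
  exact z.2 hz

end SimpleGraph

open SimpleGraph

/-- If `G` is a two-connected graph on `[n+1]` whose last vertex is not
adjacent to some other vertex, then there is a non-neighbour `a` of the last
vertex and two internally disjoint paths from `a` to the last vertex, each
meeting the neighbourhood of the last vertex in exactly one vertex; the two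
intersection vertices form a `(G,n)`-permissible edge. -/
theorem exists_permissible_edge (n : ℕ) (G : SimpleGraph (Fin (n + 1)))
    (hG : TwoConnected G)
    (h : ∃ w : Fin (n + 1), w ≠ Fin.last n ∧ ¬ G.Adj (Fin.last n) w) :
    ∃ a : Fin (n + 1), a ≠ Fin.last n ∧ ¬ G.Adj (Fin.last n) a ∧
      ∃ (p q : G.Walk a (Fin.last n)), p.IsPath ∧ q.IsPath ∧
        (∀ x, x ∈ p.support → x ∈ q.support → x = a ∨ x = Fin.last n) ∧
        ∃ u v : Fin (n + 1), u ≠ v ∧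
          G.Adj (Fin.last n) u ∧ G.Adj (Fin.last n) v ∧
          u ∈ p.support ∧ (∀ x, x ∈ p.support → G.Adj (Fin.last n) x → x = u) ∧
          v ∈ q.support ∧ (∀ x, x ∈ q.support → G.Adj (Fin.last n) x → x = v) := by
  obtain ⟨w, hwt, hw⟩ := h
  obtain ⟨u, htu, P, -, -, htP, hPu⟩ :=
    (hG.1.preconnected w (Fin.last n)).some.exists_isPath_to_first_adj hwt
  obtain ⟨W, huW⟩ := (hG.2 u).exists_walk_notMem_support (x := w) (y := Fin.last n)
    (by rintro rfl; exact hw htu) (G.ne_of_adj htu)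
  obtain ⟨v, htv, Q, hQ, hQW, htQ, hQv⟩ := W.exists_isPath_to_first_adj hwt
  obtain ⟨a, p, q, hp, hq, hpP, hqQ, hpq⟩ := P.exists_isPath_pair_meeting_only_at_start hQ
  have hau : a ≠ u := by rintro rfl; exact huW (hQW (hqQ q.start_mem_support))
  refine ⟨a, fun hat => htP (hat ▸ hpP p.start_mem_support),
    fun hta => hau (hPu a (hpP p.start_mem_support) hta),
    p.concat htu.symm, q.concat htv.symm, hp.concat (fun h => htP (hpP h)) _,
    hq.concat (fun h => htQ (hqQ h)) _, ?_, u, v,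
    fun huv => huW (hQW (huv ▸ Q.end_mem_support)), htu, htv, by simp [Walk.support_concat],
    Walk.eq_of_adj_of_mem_support_concat _ fun z hz => hPu z (hpP hz),
    by simp [Walk.support_concat],
    Walk.eq_of_adj_of_mem_support_concat _ fun z hz => hQv z (hqQ hz)⟩
  intro x hxp hxq
  simp only [Walk.support_concat, List.mem_append, List.mem_singleton] at hxp hxq
  rcases hxp with hxp | rfl
  · rcases hxq with hxq | rfl
    · exact .inl (hpq x hxp hxq)
    · exact .inr rfl
  · exact .inr rfl
end

section
/- The map Ψ_B on connected graphs on [m], which replaces G by G⊕η_G (symmetric difference of the edge set with the maximal externally active edge η_G) when G has an externally active edge, and fixes G otherwise, is an involution whose fixed points are exactly the increasing trees on [m]. -/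
open scoped Classical

/-- The smaller endpoint of an unordered pair. -/
def eMin {m : ℕ} (e : Sym2 (Fin m)) : Fin m :=
  Sym2.lift ⟨fun a b => min a b, fun a b => min_comm a b⟩ e

/-- The larger endpoint of an unordered pair. -/
def eMax {m : ℕ} (e : Sym2 (Fin m)) : Fin m :=
  Sym2.lift ⟨fun a b => max a b, fun a b => max_comm a b⟩ e

/-- The lexicographic (strict) order on edges:
`{i,j} < {k,l}` iff `min{i,j} < min{k,l}`, or the minima agree and
`max{i,j} < max{k,l}`. -/
def edgeLt {m : ℕ} (e f : Sym2 (Fin m)) : Prop :=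
  eMin e < eMin f ∨ (eMin e = eMin f ∧ eMax e < eMax f)

/-- The spanning subgraph `G^{>e}` of `G` consisting of the edges strictly
greater than `e` in the lexicographic order. -/
def gtSubgraph {m : ℕ} (G : SimpleGraph (Fin m)) (e : Sym2 (Fin m)) :
    SimpleGraph (Fin m) where
  Adj a b := G.Adj a b ∧ edgeLt e s(a, b)
  symm := ⟨fun a b hab => by
    refine ⟨hab.1.symm, ?_⟩
    have := hab.2
    rwa [Sym2.eq_swap] at this⟩
  loopless := ⟨fun a ha => G.loopless.irrefl a ha.1⟩

/-- An edge `e ∈ [m]^(2)` is externally active for `G` if there is a path in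
`G^{>e}` between the endpoints of `e`. -/
def ExtActive {m : ℕ} (G : SimpleGraph (Fin m)) (e : Sym2 (Fin m)) : Prop :=
  ∃ a b : Fin m, e = s(a, b) ∧ a ≠ b ∧ (gtSubgraph G e).Reachable a b

/-- `G ⊕ e`: the graph whose edge set is the symmetric difference of the edge
set of `G` with `{e}`. -/
def oplus {m : ℕ} (G : SimpleGraph (Fin m)) (e : Sym2 (Fin m)) :
    SimpleGraph (Fin m) :=
  SimpleGraph.fromEdgeSet (symmDiff G.edgeSet {e})

/-- An increasing tree on `[m]` (root `0`): a labelled tree in which every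
vertex other than the root is adjacent to exactly one vertex with a smaller
label; equivalently, labels increase along every path from the root to a
leaf. -/
def IncreasingTree {m : ℕ} (G : SimpleGraph (Fin (m + 1))) : Prop :=
  G.IsTree ∧ ∀ v : Fin (m + 1), v ≠ 0 → ∃! u : Fin (m + 1), G.Adj v u ∧ u < v

/-!
Toggling the maximal externally active edge `η` changes no graph `G^{>f}` with `f ≥ η`, so `η`
is still externally active, and still maximal, in `G ⊕ η`: hence `Ψ` is an involution. If `η` is
an edge of `G`, removing it keeps `G` connected, since its endpoints are joined in `G^{>η}`.

A connected graph without externally active edges is acyclic, because the smallest edge of a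
cycle is active, and no vertex has two smaller neighbours `u₁ < u₂`, because the path through
that vertex makes `{u₁, u₂}` active. In a graph where every vertex has at most one smaller
neighbour, a path that leaves a vertex upwards keeps climbing; this shows both that every
nonzero vertex has a smaller neighbour (follow a path to `0`) and that no edge `{a, b}` with
`a < b` is active (a path in `G^{>{a,b}}` leaves `a` above `b` and so never returns to `b`).
-/

namespace Bernardi

open SimpleGraph

section EdgeOrder

variable {n : ℕ}

@[simp] lemma eMin_mk (a b : Fin n) : eMin s(a, b) = min a b := rfl

@[simp] lemma eMax_mk (a b : Fin n) : eMax s(a, b) = max a b := rfl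

lemma mk_eMin_eMax (e : Sym2 (Fin n)) : s(eMin e, eMax e) = e := by
  induction e using Sym2.ind with
  | _ a b =>
    rcases le_total a b with h | h
    · simp [h]
    · simp [h, Sym2.eq_swap]

def edgeKey (e : Sym2 (Fin n)) : Fin n ×ₗ Fin n := toLex (eMin e, eMax e)

lemma edgeKey_injective : Function.Injective (edgeKey (n := n)) := fun e f h => by
  rw [← mk_eMin_eMax e, ← mk_eMin_eMax f]
  simp_all [edgeKey]

lemma edgeLt_iff_edgeKey_lt {e f : Sym2 (Fin n)} : edgeLt e f ↔ edgeKey e < edgeKey f :=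
  (Prod.Lex.toLex_lt_toLex (x := (eMin e, eMax e)) (y := (eMin f, eMax f))).symm

lemma edgeLt_irrefl (e : Sym2 (Fin n)) : ¬ edgeLt e e := by
  simp [edgeLt_iff_edgeKey_lt]

lemma edgeLt_asymm {e f : Sym2 (Fin n)} (h : edgeLt e f) : ¬ edgeLt f e := by
  rw [edgeLt_iff_edgeKey_lt] at h ⊢
  exact h.not_gt

lemma edgeLt_or_edgeLt_of_ne {e f : Sym2 (Fin n)} (h : e ≠ f) : edgeLt e f ∨ edgeLt f e := by
  simp only [edgeLt_iff_edgeKey_lt]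
  exact (edgeKey_injective.ne h).lt_or_gt

lemma edgeLt_of_edgeKey_le_of_ne {e f : Sym2 (Fin n)} (hle : edgeKey e ≤ edgeKey f) (h : e ≠ f) :
    edgeLt e f :=
  edgeLt_iff_edgeKey_lt.mpr (hle.lt_of_ne (edgeKey_injective.ne h))

end EdgeOrder

section Oplus

variable {n : ℕ} {G : SimpleGraph (Fin n)} {f η : Sym2 (Fin n)}

lemma ExtActive.not_isDiag (h : ExtActive G η) : ¬ η.IsDiag := by
  obtain ⟨a, b, rfl, hab, -⟩ := h
  simpa using hab

lemma oplus_adj_of_ne {a b : Fin n} (h : s(a, b) ≠ η) : (oplus G η).Adj a b ↔ G.Adj a b := by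
  simp only [oplus, fromEdgeSet_adj, Set.mem_symmDiff, mem_edgeSet, Set.mem_singleton_iff, h]
  simpa using Adj.ne

lemma edgeSet_oplus (hη : ¬ η.IsDiag) : (oplus G η).edgeSet = symmDiff G.edgeSet {η} := by
  rw [oplus, edgeSet_fromEdgeSet, sdiff_eq_left, Set.disjoint_left]
  rintro _ (⟨he, -⟩ | ⟨rfl, -⟩) hd
  exacts [G.not_isDiag_of_mem_edgeSet he hd, hη hd]

lemma oplus_oplus (hη : ¬ η.IsDiag) : oplus (oplus G η) η = G := by
  rw [oplus, edgeSet_oplus hη, symmDiff_symmDiff_cancel_right, fromEdgeSet_edgeSet]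

lemma oplus_ne_self (hη : ¬ η.IsDiag) : oplus G η ≠ G := fun h => by
  have := congrArg edgeSet h
  rw [edgeSet_oplus hη, symmDiff_eq_left] at this
  exact Set.singleton_ne_empty η this

lemma gtSubgraph_oplus (h : ¬ edgeLt f η) : gtSubgraph (oplus G η) f = gtSubgraph G f := by
  ext a b
  refine and_congr_left fun hlt => oplus_adj_of_ne ?_
  rintro rfl
  exact h hlt

lemma extActive_oplus_iff (h : ¬ edgeLt f η) : ExtActive (oplus G η) f ↔ ExtActive G f := by
  simp only [ExtActive, gtSubgraph_oplus h]

lemma oplus_eq_deleteEdges (hη : η ∈ G.edgeSet) : oplus G η = G.deleteEdges {η} := by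
  ext a b
  by_cases h : s(a, b) = η
  · subst h
    simp [oplus, Set.mem_symmDiff, hη]
  · simp [oplus_adj_of_ne h, h]

lemma le_oplus (hη : η ∉ G.edgeSet) : G ≤ oplus G η := by
  intro a b hab
  refine (oplus_adj_of_ne ?_).mpr hab
  rintro rfl
  exact hη hab

lemma ExtActive.not_isBridge (h : ExtActive G η) : ¬ G.IsBridge η := by
  obtain ⟨a, b, rfl, -, hab⟩ := h
  refine isBridge_iff.not_left.mpr (hab.mono fun x y hxy => ?_)
  refine (deleteEdges_adj ..).mpr ⟨hxy.1, ?_⟩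
  intro h
  have hlt := hxy.2
  rw [Set.mem_singleton_iff.mp h] at hlt
  exact edgeLt_irrefl _ hlt

lemma connected_oplus (hG : G.Connected) (hη : ExtActive G η) : (oplus G η).Connected := by
  by_cases hmem : η ∈ G.edgeSet
  · rcases η with ⟨a, b⟩
    rw [oplus_eq_deleteEdges hmem]
    exact hG.connected_delete_edge_of_not_isBridge (ExtActive.not_isBridge hη)
  · exact hG.mono (le_oplus hmem)

end Oplus

section MaxActive

variable {n : ℕ} {G : SimpleGraph (Fin n)} {η η' : Sym2 (Fin n)}

def IsMaxExtActive (G : SimpleGraph (Fin n)) (η : Sym2 (Fin n)) : Prop :=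
  ExtActive G η ∧ ∀ f, ExtActive G f → f = η ∨ edgeLt f η

lemma IsMaxExtActive.unique (h : IsMaxExtActive G η) (h' : IsMaxExtActive G η') : η = η' := by
  rcases h'.2 η h.1 with rfl | hlt
  · rfl
  · rcases h.2 η' h'.1 with rfl | hlt'
    exacts [rfl, absurd hlt' (edgeLt_asymm hlt)]

/-- Toggling `η` changes no graph `G^{>f}` with `f ≥ η`, so the active edges `≥ η` are unchanged. -/
lemma IsMaxExtActive.oplus (h : IsMaxExtActive G η) : IsMaxExtActive (oplus G η) η := by
  refine ⟨(extActive_oplus_iff (edgeLt_irrefl η)).mpr h.1, fun f hf => ?_⟩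
  by_cases hfη : f = η
  · exact Or.inl hfη
  rcases edgeLt_or_edgeLt_of_ne hfη with hlt | hgt
  · exact Or.inr hlt
  · exact h.2 f ((extActive_oplus_iff (edgeLt_asymm hgt)).mp hf)

end MaxActive

section LowerNeighbors

variable {V : Type*} [LinearOrder V] {G : SimpleGraph V}

/-- The unique smaller neighbour of each vertex on the path is the vertex the path just left,
so the path can only climb. -/
lemma le_of_isPath_of_adj_lt (hlow : ∀ v, {u | G.Adj v u ∧ u < v}.Subsingleton) :
    ∀ {z y : V} (p : G.Walk z y), p.IsPath →
      ∀ {x : V}, G.Adj z x → x < z → x ∉ p.support → z ≤ y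
  | _, _, .nil, _, _, _, _, _ => le_rfl
  | z, _, .cons (v := w) hzw p, hp, x, hzx, hxz, hx => by
    rw [Walk.cons_isPath_iff] at hp
    rw [Walk.support_cons, List.mem_cons, not_or] at hx
    have hzw_lt : z < w := by
      refine lt_of_not_ge fun hwz => hx.2 ?_
      rw [hlow z ⟨hzx, hxz⟩ ⟨hzw, hwz.lt_of_ne hzw.ne'⟩]
      exact p.start_mem_support
    exact hzw_lt.le.trans (le_of_isPath_of_adj_lt hlow p hp.1 hzw.symm hzw_lt hp.2)

lemma exists_adj_lt_of_reachable (hlow : ∀ v, {u | G.Adj v u ∧ u < v}.Subsingleton) {v r : V}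
    (hvr : G.Reachable v r) (hrv : r < v) : ∃ u, G.Adj v u ∧ u < v := by
  by_contra! hmin
  obtain ⟨p, hp⟩ := hvr.exists_isPath
  cases p with
  | nil => exact hrv.false
  | cons hvw q =>
    rw [Walk.cons_isPath_iff] at hp
    have hvw_lt := (hmin _ hvw).lt_of_ne hvw.ne
    exact (hvw_lt.trans_le (le_of_isPath_of_adj_lt hlow q hp.1 hvw.symm hvw_lt hp.2)).not_gt hrv

end LowerNeighbors

section IncreasingTrees

variable {n : ℕ} {G : SimpleGraph (Fin n)}

lemma lt_and_lt_of_edgeLt {a b v : Fin n} (hab : a < b) (h : edgeLt s(a, b) s(a, v)) :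
    a < v ∧ b < v := by
  simp only [edgeLt, eMin_mk, eMax_mk] at h
  grind

lemma not_extActive_of_subsingleton (hlow : ∀ v, {u | G.Adj v u ∧ u < v}.Subsingleton)
    (e : Sym2 (Fin n)) : ¬ ExtActive G e := by
  suffices h : ∀ a b, a < b → ¬ (gtSubgraph G s(a, b)).Reachable a b by
    rintro ⟨a, b, rfl, hab, hr⟩
    rcases hab.lt_or_gt with hab | hba
    · exact h a b hab hr
    · rw [Sym2.eq_swap] at hr
      exact h b a hba hr.symm
  intro a b hab hr
  have hH : ∀ v, {u | (gtSubgraph G s(a, b)).Adj v u ∧ u < v}.Subsingleton :=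
    fun v => (hlow v).anti fun u hu => ⟨hu.1.1, hu.2⟩
  obtain ⟨p, hp⟩ := hr.exists_isPath
  cases p with
  | nil => exact hab.false
  | cons hav q =>
    rw [Walk.cons_isPath_iff] at hp
    obtain ⟨hav_lt, hbv⟩ := lt_and_lt_of_edgeLt hab hav.2
    exact (le_of_isPath_of_adj_lt hH q hp.1 hav.symm hav_lt hp.2).not_gt hbv

/-- The path `u₁ v u₂` uses only edges above `s(u₁, u₂)`. -/
lemma extActive_of_adj_of_adj {v u₁ u₂ : Fin n} (h₁ : G.Adj v u₁) (h₂ : G.Adj v u₂)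
    (h₁₂ : u₁ < u₂) (h₂v : u₂ < v) : ExtActive G s(u₁, u₂) := by
  have h₁v := h₁₂.trans h₂v
  refine ⟨u₁, u₂, rfl, h₁₂.ne, (Adj.reachable (v := v) ?_).trans (Adj.reachable ?_)⟩
  · exact ⟨h₁.symm, Or.inr ⟨by simp [h₁₂.le, h₁v.le], by simpa [h₁₂.le, h₁v.le]⟩⟩
  · exact ⟨h₂, Or.inl (by simpa [h₁₂.le, h₂v.le])⟩

/-- The smallest edge of a cycle is active: the rest of the cycle joins its endpoints. -/
lemma exists_extActive_of_isCycle {v : Fin n} {c : G.Walk v v} (hc : c.IsCycle) :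
    ∃ e, ExtActive G e := by
  have hne : c.edges.toFinset.Nonempty := by
    simpa [List.toFinset_nonempty_iff, Walk.edges_eq_nil] using hc.not_nil
  obtain ⟨e, he, hmin⟩ := c.edges.toFinset.exists_min_image edgeKey hne
  rw [List.mem_toFinset] at he
  set H := fromEdgeSet {f | f ∈ c.edges}
  have hcH : ∀ f ∈ c.edges, f ∈ H.edgeSet := fun f hf => by
    rw [edgeSet_fromEdgeSet]
    exact ⟨hf, G.not_isDiag_of_mem_edgeSet (c.edges_subset_edgeSet hf)⟩
  rcases e with ⟨a, b⟩
  obtain ⟨hadj, hreach⟩ := adj_and_reachable_delete_edges_iff_exists_cycle.mpr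
    ⟨v, c.transfer H hcH, hc.transfer hcH, by rwa [Walk.edges_transfer]⟩
  refine ⟨s(a, b), a, b, rfl, hadj.ne, hreach.mono fun x y hxy => ?_⟩
  obtain ⟨⟨hxy_mem, -⟩, hxy_ne⟩ := (deleteEdges_adj ..).mp hxy
  exact ⟨c.adj_of_mem_edges hxy_mem,
    edgeLt_of_edgeKey_le_of_ne (hmin _ (List.mem_toFinset.mpr hxy_mem)) (Ne.symm hxy_ne)⟩

lemma increasingTree_iff_not_exists_extActive {G : SimpleGraph (Fin (n + 1))}
    (hG : G.Connected) : IncreasingTree G ↔ ¬ ∃ e, ExtActive G e := by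
  constructor
  · rintro ⟨-, hinc⟩ ⟨e, he⟩
    refine not_extActive_of_subsingleton (fun v u₁ hu₁ u₂ hu₂ => ?_) e he
    obtain ⟨u, -, hu⟩ := hinc v ((Fin.zero_le _).trans_lt hu₁.2).ne'
    exact (hu u₁ hu₁).trans (hu u₂ hu₂).symm
  · intro hE
    have hlow : ∀ v, {u | G.Adj v u ∧ u < v}.Subsingleton := by
      intro v u₁ ⟨h₁, h₁v⟩ u₂ ⟨h₂, h₂v⟩
      by_contra hne
      rcases Ne.lt_or_gt hne with h₁₂ | h₂₁
      exacts [hE ⟨_, extActive_of_adj_of_adj h₁ h₂ h₁₂ h₂v⟩,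
        hE ⟨_, extActive_of_adj_of_adj h₂ h₁ h₂₁ h₁v⟩]
    refine ⟨⟨hG, fun _ _ hc => hE (exists_extActive_of_isCycle hc)⟩, fun v hv => ?_⟩
    obtain ⟨u, hu⟩ := exists_adj_lt_of_reachable hlow (hG.preconnected v 0) (Fin.pos_of_ne_zero hv)
    exact ⟨u, hu, fun u' hu' => hlow v hu' hu⟩

end IncreasingTrees

end Bernardi

open Bernardi

/-- Bernardi's involution: the map `Ψ` which sends a connected graph `G` with
an externally active edge to `G ⊕ η_G`, where `η_G` is the lexicographically
maximal externally active edge, and fixes `G` otherwise, maps connected graphs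
to connected graphs, is an involution on them, and its fixed points are
exactly the increasing trees. -/
theorem bernardi_involution (m : ℕ)
    (Ψ : SimpleGraph (Fin (m + 1)) → SimpleGraph (Fin (m + 1)))
    (hact : ∀ G : SimpleGraph (Fin (m + 1)), G.Connected →
      (∃ e, ExtActive G e) →
      ∃ η, ExtActive G η ∧ (∀ f, ExtActive G f → f = η ∨ edgeLt f η) ∧
        Ψ G = oplus G η)
    (hfix : ∀ G : SimpleGraph (Fin (m + 1)), G.Connected →
      ¬ (∃ e, ExtActive G e) → Ψ G = G) :
    ∀ G : SimpleGraph (Fin (m + 1)), G.Connected →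
      (Ψ G).Connected ∧ Ψ (Ψ G) = G ∧ (Ψ G = G ↔ IncreasingTree G) := by
  intro G hG
  rw [increasingTree_iff_not_exists_extActive hG]
  by_cases hE : ∃ e, ExtActive G e
  · obtain ⟨η, hηa, hηmax, hΨ⟩ := hact G hG hE
    have hη : IsMaxExtActive G η := ⟨hηa, hηmax⟩
    have hG' : (oplus G η).Connected := connected_oplus hG hη.1
    obtain ⟨η', hη'a, hη'max, hΨ'⟩ := hact _ hG' ⟨η, hη.oplus.1⟩
    have hηη' : η' = η := IsMaxExtActive.unique ⟨hη'a, hη'max⟩ hη.oplus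
    refine ⟨hΨ ▸ hG', ?_, iff_of_false ?_ (not_not.mpr hE)⟩
    · rw [hΨ, hΨ', hηη', oplus_oplus hη.1.not_isDiag]
    · rw [hΨ]
      exact oplus_ne_self hη.1.not_isDiag
  · rw [hfix G hG hE, hfix G hG hE]
    exact ⟨hG, rfl, iff_of_true rfl hE⟩
end

section
/- For a matroid M with a total order on its ground set E, the power set 2^E is the disjoint union over all bases B of the intervals [B \ ι(B), B ∪ ε(B)], where ε(B) is the set of externally active elements and ι(B) the set of internally active elements of B. -/
open scoped Classical

/-- For a matroid `M` with a totally ordered ground set and a basis `B`, the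
set of externally active elements of `B`: elements `e ∈ E \ B` depending on
(in the closure of) the elements of `B` larger than `e`. -/
def extActive {α : Type*} [LinearOrder α] (M : Matroid α) (B : Set α) : Set α :=
  {e | e ∈ M.E \ B ∧ e ∈ M.closure {f | f ∈ B ∧ e < f}}

/-- The set of internally active elements of a basis `B`: elements `e ∈ B`
externally active on `E \ B` in the dual matroid. -/
def intActive {α : Type*} [LinearOrder α] (M : Matroid α) (B : Set α) : Set α :=
  {e | e ∈ B ∧ e ∈ M✶.closure {f | f ∈ M.E \ B ∧ e < f}}

/-!
Existence: order the ground set so that the elements outside `A` come first, in decreasing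
order, followed by those of `A` in increasing order. The greedy basis for this order, in which
every element outside the basis is spanned by the later basis elements, lies in the interval
of `A`.

Uniqueness: if two such bases `B₁, B₂` differ at `e ∈ (B₁ \ B₂) ∩ A`, then `e` is externally
active on `B₂`, and some element `c ≠ e` of its fundamental circuit lies outside the hyperplane
spanned by `B₁ \ {e}`. As `e < c`, the element `c` is not externally active on `B₁`, so `c ∉ A`
and `c` must be internally active on `B₂`. It is not: the rest of the circuit lies in
`B₂ ∪ {e}`, off the fundamental cocircuit of `c`, and a circuit never meets a cocircuit in a
single element. For `e ∉ A` run the same argument in the dual matroid, which exchanges the two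
activities.
-/

open Set

namespace Matroid

variable {α β : Type*} {M : Matroid α} {B X : Set α} {b : α}

lemma exists_indep_forall_mem_closure_of_injective [LinearOrder β] {φ : α → β}
    (hφ : φ.Injective) (s : Finset α) (hs : (s : Set α) ⊆ M.E) :
    ∃ I ⊆ (s : Set α), M.Indep I ∧
      ∀ e ∈ (s : Set α) \ I, e ∈ M.closure {f | f ∈ I ∧ φ e < φ f} := by
  induction s using Finset.induction_on_min_value φ with
  | empty => exact ⟨∅, by simp, M.empty_indep, by simp⟩
  | insert a s has hmin ih =>
    rw [Finset.coe_insert, insert_subset_iff] at hs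
    obtain ⟨I, hIs, hI, hIcl⟩ := ih hs.2
    have hlt : ∀ f ∈ I, φ a < φ f := fun f hf =>
      (hmin f (hIs hf)).lt_of_ne (hφ.ne fun h => has (h ▸ hIs hf))
    rw [Finset.coe_insert]
    by_cases haI : a ∈ M.closure I
    · refine ⟨I, hIs.trans (subset_insert _ _), hI, ?_⟩
      rintro e ⟨rfl | he, heI⟩
      · rwa [show {f | f ∈ I ∧ φ e < φ f} = I from ext fun f => and_iff_left_of_imp (hlt f)]
      · exact hIcl e ⟨he, heI⟩
    · refine ⟨insert a I, insert_subset_insert hIs, hI.insert_indep_iff.2 (Or.inl ⟨hs.1, haI⟩), ?_⟩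
      rintro e ⟨rfl | he, heI⟩
      · exact absurd (mem_insert _ _) heI
      · have hsub : {f | f ∈ I ∧ φ e < φ f} ⊆ {f | f ∈ insert a I ∧ φ e < φ f} :=
          fun f hf => ⟨Or.inr hf.1, hf.2⟩
        exact M.closure_subset_closure hsub (hIcl e ⟨he, fun h => heI (Or.inr h)⟩)

lemma exists_isBase_forall_mem_closure_of_injective [M.Finite] [LinearOrder β] {φ : α → β}
    (hφ : φ.Injective) :
    ∃ B, M.IsBase B ∧ ∀ e ∈ M.E \ B, e ∈ M.closure {f | f ∈ B ∧ φ e < φ f} := by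
  obtain ⟨B, hBE, hB, hBcl⟩ := exists_indep_forall_mem_closure_of_injective (M := M) hφ
    M.ground_finite.toFinset (by simp)
  rw [Finite.coe_toFinset] at hBE hBcl
  refine ⟨B, hB.isBase_of_ground_subset_closure fun e he => ?_, hBcl⟩
  by_cases heB : e ∈ B
  · exact M.subset_closure B hB.subset_ground heB
  · exact M.closure_subset_closure (fun f hf => hf.1) (hBcl e ⟨he, heB⟩)

lemma IsBase.mem_dual_closure_iff (hB : M.IsBase B) (hb : b ∈ B) (hX : X ⊆ M.E \ B) :
    b ∈ M✶.closure X ↔ b ∉ M.closure (M.E \ insert b X) := by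
  have hXi : M✶.Indep X := hB.compl_isBase_dual.indep.subset hX
  have hbX : b ∉ X := fun h => (hX h).2 hb
  have hbXE : insert b X ⊆ M.E := insert_subset (hB.subset_ground hb) fun x hx => (hX hx).1
  rw [hXi.mem_closure_iff_of_notMem hbX, Dep, dual_ground, and_iff_left hbXE, ← coindep_def,
    coindep_iff_closure_compl_eq_ground hbXE, not_iff_not]
  refine ⟨fun h => by rw [h]; exact hB.subset_ground hb, fun h => ?_⟩
  refine (M.closure_subset_ground _).antisymm (hB.closure_eq.symm.subset.trans
    (M.closure_subset_closure_of_subset_closure fun y hy => ?_))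
  obtain rfl | hyb := eq_or_ne y b
  · exact h
  · refine M.subset_closure _ sdiff_subset ⟨hB.subset_ground hy, ?_⟩
    rintro (rfl | hyX)
    · exact hyb rfl
    · exact (hX hyX).2 hy

end Matroid

open Matroid

section Activity

variable {α : Type*} {A : Set α} {x y : α}

noncomputable def activityKey (A : Set α) (x : α) : αᵒᵈ ⊕ₗ α :=
  if x ∈ A then toLex (.inr x) else toLex (.inl (OrderDual.toDual x))

lemma activityKey_injective (A : Set α) : (activityKey A).Injective := by
  intro x y h
  unfold activityKey at h
  split_ifs at h <;> simp at h <;> exact h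

variable [LinearOrder α] {M : Matroid α} {B B₁ B₂ : Set α} {e : α}

lemma lt_of_mem_of_activityKey_lt (hx : x ∈ A) (h : activityKey A x < activityKey A y) : x < y := by
  unfold activityKey at h
  split_ifs at h
  · exact Sum.Lex.inr_lt_inr_iff.1 h
  · exact absurd h Sum.Lex.not_inr_lt_inl

lemma lt_of_notMem_of_activityKey_lt (hx : x ∉ A) (h : activityKey A y < activityKey A x) :
    x < y := by
  unfold activityKey at h
  split_ifs at h
  · exact absurd h Sum.Lex.not_inr_lt_inl
  · exact OrderDual.toDual_lt_toDual.1 (Sum.Lex.inl_lt_inl_iff.1 h)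

def activityInterval (M : Matroid α) (B : Set α) : Set (Set α) :=
  Icc (B \ intActive M B) (B ∪ extActive M B)

lemma extActive_dual_compl (hB : B ⊆ M.E) : extActive M✶ (M.E \ B) = intActive M B := by
  simp only [extActive, intActive, dual_ground, sdiff_sdiff_cancel_left hB]

lemma intActive_dual_compl (hB : B ⊆ M.E) : intActive M✶ (M.E \ B) = extActive M B := by
  simp only [extActive, intActive, dual_ground, dual_dual, sdiff_sdiff_cancel_left hB]

lemma compl_mem_activityInterval_dual (hB : B ⊆ M.E) (hA : A ∈ activityInterval M B) :
    M.E \ A ∈ activityInterval M✶ (M.E \ B) := by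
  rw [activityInterval, intActive_dual_compl hB, extActive_dual_compl hB]
  obtain ⟨hlow, hup⟩ := hA
  refine ⟨fun x ⟨⟨hxE, hxB⟩, hxε⟩ => ⟨hxE, fun hxA => ?_⟩, fun x ⟨hxE, hxA⟩ => ?_⟩
  · rcases hup hxA with h | h
    exacts [hxB h, hxε h]
  · by_cases hxB : x ∈ B
    · exact Or.inr (by_contra fun h => hxA (hlow ⟨hxB, h⟩))
    · exact Or.inl ⟨hxE, hxB⟩

lemma exists_isBase_mem_activityInterval [M.Finite] (hA : A ⊆ M.E) :
    ∃ B, M.IsBase B ∧ A ∈ activityInterval M B := by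
  obtain ⟨B, hB, hgreedy⟩ :=
    M.exists_isBase_forall_mem_closure_of_injective (activityKey_injective A)
  refine ⟨B, hB, fun b ⟨hbB, hbι⟩ => by_contra fun hbA => hbι ?_, fun a haA => ?_⟩
  · refine ⟨hbB, (hB.mem_dual_closure_iff hbB fun f hf => hf.1).2 fun hcl => ?_⟩
    refine hB.indep.notMem_closure_sdiff_of_mem hbB
      (M.closure_subset_closure_of_subset_closure ?_ hcl)
    rintro y ⟨hyE, hy⟩
    rw [mem_insert_iff, not_or] at hy
    by_cases hyB : y ∈ B
    · exact M.subset_closure _ (sdiff_subset.trans hB.subset_ground) ⟨hyB, hy.1⟩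
    · have hsub : {f | f ∈ B ∧ activityKey A y < activityKey A f} ⊆ B \ {b} := by
        refine fun f ⟨hfB, hyf⟩ => ⟨hfB, ?_⟩
        rintro rfl
        exact hy.2 ⟨⟨hyE, hyB⟩, lt_of_notMem_of_activityKey_lt hbA hyf⟩
      exact M.closure_subset_closure hsub (hgreedy y ⟨hyE, hyB⟩)
  · by_cases haB : a ∈ B
    · exact Or.inl haB
    · refine Or.inr ⟨⟨hA haA, haB⟩, M.closure_subset_closure ?_ (hgreedy a ⟨hA haA, haB⟩)⟩
      exact fun f hf => ⟨hf.1, lt_of_mem_of_activityKey_lt haA hf.2⟩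

lemma mem_of_mem_activityInterval (hB₁ : M.Indep B₁) (hB₂ : M.IsBase B₂)
    (h₁ : A ⊆ B₁ ∪ extActive M B₁) (h₂ : A ∈ activityInterval M B₂) (heA : e ∈ A)
    (heB₁ : e ∈ B₁) : e ∈ B₂ := by
  by_contra heB₂
  obtain ⟨-, hecl⟩ : e ∈ extActive M B₂ := (h₂.2 heA).resolve_left heB₂
  set S := {f | f ∈ B₂ ∧ e < f}
  have hC : M.IsCircuit (M.fundCircuit e S) :=
    (hB₂.indep.subset fun f hf => hf.1).fundCircuit_isCircuit hecl fun h => heB₂ h.1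
  obtain ⟨c, ⟨hcC, hce⟩, hcH⟩ : ∃ c ∈ M.fundCircuit e S \ {e}, c ∉ M.closure (B₁ \ {e}) := by
    by_contra! h
    exact hB₁.notMem_closure_sdiff_of_mem heB₁ (M.closure_subset_closure_of_subset_closure h
      (hC.mem_closure_sdiff_singleton_of_mem (M.mem_fundCircuit e S)))
  obtain ⟨hcB₂, hec⟩ : c ∈ S := (M.fundCircuit_subset_insert e S hcC).resolve_left hce
  have hcB₁ : c ∉ B₁ := fun h =>
    hcH (M.subset_closure _ (sdiff_subset.trans hB₁.subset_ground) ⟨h, hec.ne'⟩)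
  by_cases hcA : c ∈ A
  · obtain ⟨-, hccl⟩ := (h₁ hcA).resolve_left hcB₁
    have hsub : {f | f ∈ B₁ ∧ c < f} ⊆ B₁ \ {e} := fun f hf => ⟨hf.1, (hec.trans hf.2).ne'⟩
    exact hcH (M.closure_subset_closure hsub hccl)
  · have hcι : c ∈ intActive M B₂ := by_contra fun h => hcA (h₂.1 ⟨hcB₂, h⟩)
    refine (hB₂.mem_dual_closure_iff hcB₂ fun f hf => hf.1).1 hcι.2
      (M.closure_subset_closure ?_ (hC.mem_closure_sdiff_singleton_of_mem hcC))
    rintro y ⟨hyC, hyc⟩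
    refine ⟨hC.subset_ground hyC, ?_⟩
    rintro (rfl | ⟨⟨-, hyB₂⟩, hcy⟩)
    · exact hyc rfl
    · rcases M.fundCircuit_subset_insert e S hyC with rfl | hyS
      · exact (hec.trans hcy).false
      · exact hyB₂ hyS.1

lemma subset_of_mem_activityInterval (hB₁ : M.IsBase B₁) (hB₂ : M.IsBase B₂)
    (h₁ : A ∈ activityInterval M B₁) (h₂ : A ∈ activityInterval M B₂) : B₁ ⊆ B₂ := by
  intro e heB₁
  by_contra heB₂
  by_cases heA : e ∈ A
  · exact heB₂ (mem_of_mem_activityInterval hB₁.indep hB₂ h₁.2 h₂ heA heB₁)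
  · have heE := hB₁.subset_ground heB₁
    exact (mem_of_mem_activityInterval hB₂.compl_isBase_dual.indep hB₁.compl_isBase_dual
      (compl_mem_activityInterval_dual hB₂.subset_ground h₂).2
      (compl_mem_activityInterval_dual hB₁.subset_ground h₁) ⟨heE, heA⟩ ⟨heE, heB₂⟩).2 heB₁

end Activity

/-- Björner's partition: the power set of the ground set of a matroid is the
disjoint union, over all bases `B`, of the intervals
`[B \ ι(B), B ∪ ε(B)]`; i.e. every subset `A` of the ground set lies in
exactly one such interval. -/
theorem matroid_partition {α : Type*} [LinearOrder α] (M : Matroid α)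
    [M.Finite] (A : Set α) (hA : A ⊆ M.E) :
    ∃! B : Set α, M.IsBase B ∧ B \ intActive M B ⊆ A ∧ A ⊆ B ∪ extActive M B := by
  obtain ⟨B, hB, hAB⟩ := exists_isBase_mem_activityInterval hA
  refine ⟨B, ⟨hB, hAB⟩, fun B' ⟨hB', hAB'⟩ => ?_⟩
  exact hB'.eq_of_subset_isBase hB (subset_of_mem_activityInterval hB' hB hAB' hAB)
end
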